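/- With D a PID, R1, R2 noetherian domains containing D and T = R1⊗_D R2 noetherian: if a_i is an invertible R_i-module for i=1,2, then a1 ⊗_D a2 is an invertible T-module, and in Pic(T) one has [a1⊗_D a2] = [a1⊗_{R1}T] + [T⊗_{R2}a2]. The resulting map Pic(R1) × Pic(R2) → Pic(T) is a group homomorphism. -/

import Mathlib

/-!
STATEMENT 14: Let `D` be a PID, `R1, R2` noetherian domains containing `D`, with
`T = R1 ⊗[D] R2` noetherian.  If `a_i` is an invertible `R_i`-module (`i = 1, 2`), then
`a1 ⊗[D] a2` is an invertible `T`-module with `[a1 ⊗[D] a2] = [a1 ⊗[R1] T] + [T ⊗[R2] a2]`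
in `Pic(T)`, and the resulting map `Pic(R1) × Pic(R2) → Pic(T)` is a group homomorphism.
-/

open TensorProduct
universe u

/-- A finitely generated module `a` is invertible if `a ⊗[R] b ≅ R` for some finitely
generated module `b`. -/
def IsInvertibleModule (R : Type u) [CommRing R] (a : Type u) [AddCommGroup a]
    [Module R a] : Prop :=
  Module.Finite R a ∧
    ∃ (b : Type u) (_ : AddCommGroup b) (_ : Module R b),
      Module.Finite R b ∧ Nonempty ((a ⊗[R] b) ≃ₗ[R] R)

section
variable (D R1 R2 : Type u) [CommRing D] [CommRing R1] [CommRing R2]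
  [Algebra D R1] [Algebra D R2]
variable (M1 M2 : Type u) [AddCommGroup M1] [AddCommGroup M2]
  [Module D M1] [Module R1 M1] [IsScalarTower D R1 M1]
  [Module D M2] [Module R2 M2] [IsScalarTower D R2 M2]

/-- The action of `R2` on `M1 ⊗[D] M2` through the second factor. -/
noncomputable def mod2 : Module R2 (M1 ⊗[D] M2) :=
  letI : SMul R2 (M1 ⊗[D] M2) :=
    ⟨fun r x => (TensorProduct.comm D M1 M2).symm (r • TensorProduct.comm D M1 M2 x)⟩
  Function.Injective.module R2 (TensorProduct.comm D M1 M2).toLinearMap.toAddMonoidHom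
    (TensorProduct.comm D M1 M2).injective
    (fun _ _ => (TensorProduct.comm D M1 M2).apply_symm_apply _)

/-- The natural `T = R1 ⊗[D] R2`-module structure on `M1 ⊗[D] M2`. -/
noncomputable def modT : Module (R1 ⊗[D] R2) (M1 ⊗[D] M2) := by
  letI := mod2 D R2 M1 M2
  have key : ∀ (r : R2) (m : M1) (n : M2), r • (m ⊗ₜ[D] n) = m ⊗ₜ[D] (r • n) := by
    intro r m n
    show (TensorProduct.comm D M1 M2).symm (r • TensorProduct.comm D M1 M2 (m ⊗ₜ[D] n)) = _
    rw [TensorProduct.comm_tmul, TensorProduct.smul_tmul', TensorProduct.comm_symm_tmul]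
  letI : IsScalarTower D R2 (M1 ⊗[D] M2) := by
    constructor
    intro d r x
    induction x using TensorProduct.induction_on with
    | zero => simp
    | tmul m n => rw [key, key, smul_assoc, TensorProduct.tmul_smul]
    | add a b ha hb => simp only [smul_add, ha, hb]
  letI : SMulCommClass R1 R2 (M1 ⊗[D] M2) := by
    constructor
    intro r1 r2 x
    induction x using TensorProduct.induction_on with
    | zero => simp
    | tmul m n => rw [key, TensorProduct.smul_tmul', TensorProduct.smul_tmul', key]
    | add a b ha hb => simp only [smul_add, ha, hb]
  exact TensorProduct.Algebra.module

end


/-! ### Auxiliary machinery -/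

section BiLiftDefs
variable {R1 R2 T M1 M2 X : Type u} [CommRing R1] [CommRing R2] [CommRing T]
  [Algebra R1 T] [Algebra R2 T]
  [AddCommGroup M1] [Module R1 M1] [AddCommGroup M2] [Module R2 M2]
  [AddCommGroup X] [Module T X] [Module R2 X] [IsScalarTower R2 T X]
  (phi : M1 → M2 → X)
  (hadd1 : ∀ m1 m1' m2, phi (m1 + m1') m2 = phi m1 m2 + phi m1' m2)
  (hadd2 : ∀ m1 m2 m2', phi m1 (m2 + m2') = phi m1 m2 + phi m1 m2')
  (hs1 : ∀ (r : R1) (m1 : M1) (m2 : M2), phi (r • m1) m2 = algebraMap R1 T r • phi m1 m2)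
  (hs2 : ∀ (r : R2) (m1 : M1) (m2 : M2), phi m1 (r • m2) = r • phi m1 m2)

/-- The bilinear lift `(T ⊗[R1] M1) ⊗[T] (T ⊗[R2] M2) →ₗ[T] X` of a map `phi` which is
`R1`-balanced in the first variable and `R2`-balanced in the second. -/
noncomputable def biLift : ((T ⊗[R1] M1) ⊗[T] (T ⊗[R2] M2)) →ₗ[T] X := by
  letI : Module R1 ((T ⊗[R2] M2) →ₗ[T] X) := Module.compHom _ (algebraMap R1 T)
  letI : IsScalarTower R1 T ((T ⊗[R2] M2) →ₗ[T] X) :=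
    ⟨fun r t x => by rw [Algebra.smul_def, mul_smul]; rfl⟩
  refine TensorProduct.lift (LinearMap.liftBaseChange T
    { toFun := fun m1 => LinearMap.liftBaseChange T
        { toFun := fun m2 => phi m1 m2
          map_add' := fun a b => hadd2 m1 a b
          map_smul' := fun r m2 => hs2 r m1 m2 }
      map_add' := fun a b =>
        (LinearMap.liftBaseChangeEquiv T).symm.injective (LinearMap.ext fun m2 => by
          show (1 : T) • phi (a + b) m2 =
            (1 : T) • phi a m2 + (1 : T) • phi b m2
          rw [one_smul, one_smul, one_smul, hadd1])
      map_smul' := fun r m1 =>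
        (LinearMap.liftBaseChangeEquiv T).symm.injective (LinearMap.ext fun m2 => by
          show (1 : T) • phi (r • m1) m2 = algebraMap R1 T r • ((1 : T) • phi m1 m2)
          rw [one_smul, one_smul, hs1]) })

theorem biLift_tmul (t s : T) (m1 : M1) (m2 : M2) :
    biLift phi hadd1 hadd2 hs1 hs2 ((t ⊗ₜ[R1] m1) ⊗ₜ[T] (s ⊗ₜ[R2] m2))
      = (t * s) • phi m1 m2 := by
  simp only [biLift, TensorProduct.lift.tmul, LinearMap.liftBaseChange_tmul,
    LinearMap.coe_mk, AddHom.coe_mk, LinearMap.smul_apply, mul_smul]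

end BiLiftDefs

section BiLiftD
variable {D R1 R2 T M1 M2 Y : Type u} [CommRing D] [CommRing R1] [CommRing R2] [CommRing T]
  [Algebra D R1] [Algebra D R2] [Algebra R1 T] [Algebra R2 T] [Algebra D T]
  [AddCommGroup M1] [Module D M1] [Module R1 M1] [IsScalarTower D R1 M1]
  [AddCommGroup M2] [Module D M2] [Module R2 M2] [IsScalarTower D R2 M2]
  [AddCommGroup Y] [Module T Y]
  (hc1 : ∀ d, algebraMap R1 T (algebraMap D R1 d) = algebraMap D T d)
  (hc2 : ∀ d, algebraMap R2 T (algebraMap D R2 d) = algebraMap D T d)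
  (psi : M1 → M2 → Y)
  (hadd1 : ∀ m1 m1' m2, psi (m1 + m1') m2 = psi m1 m2 + psi m1' m2)
  (hadd2 : ∀ m1 m2 m2', psi m1 (m2 + m2') = psi m1 m2 + psi m1 m2')
  (hs1 : ∀ (r : R1) (m1 : M1) (m2 : M2), psi (r • m1) m2 = algebraMap R1 T r • psi m1 m2)
  (hs2 : ∀ (r : R2) (m1 : M1) (m2 : M2), psi m1 (r • m2) = algebraMap R2 T r • psi m1 m2)

/-- The additive lift `M1 ⊗[D] M2 →+ Y` of a suitably balanced map `psi`. -/
noncomputable def biLiftD : (M1 ⊗[D] M2) →+ Y := by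
  letI : Module D Y := Module.compHom _ (algebraMap D T)
  letI : SMulCommClass D D Y := ⟨fun a b y => by
    show algebraMap D T a • algebraMap D T b • y = algebraMap D T b • algebraMap D T a • y
    rw [smul_smul, smul_smul, mul_comm]⟩
  exact (TensorProduct.lift
    { toFun := fun m1 =>
        { toFun := fun m2 => psi m1 m2
          map_add' := fun a b => hadd2 m1 a b
          map_smul' := fun d m2 => by
            show psi m1 (d • m2) = algebraMap D T d • psi m1 m2
            rw [← algebraMap_smul R2 d m2, hs2, hc2] }
      map_add' := fun a b => LinearMap.ext fun m2 => hadd1 a b m2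
      map_smul' := fun d m1 => LinearMap.ext fun m2 => by
        show psi (d • m1) m2 = algebraMap D T d • psi m1 m2
        rw [← algebraMap_smul R1 d m1, hs1, hc1] }).toAddMonoidHom

theorem biLiftD_tmul (m1 : M1) (m2 : M2) :
    biLiftD hc1 hc2 psi hadd1 hadd2 hs1 hs2 (m1 ⊗ₜ[D] m2) = psi m1 m2 := by
  simp only [biLiftD, LinearMap.toAddMonoidHom_coe, TensorProduct.lift.tmul,
    LinearMap.coe_mk, AddHom.coe_mk]

end BiLiftD

section Aux
variable (D R1 R2 : Type u) [CommRing D] [CommRing R1] [CommRing R2]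
  [Algebra D R1] [Algebra D R2]
variable (M1 M2 : Type u) [AddCommGroup M1] [AddCommGroup M2]
  [Module D M1] [Module R1 M1] [IsScalarTower D R1 M1]
  [Module D M2] [Module R2 M2] [IsScalarTower D R2 M2]

theorem modT_key (r1 : R1) (r2 : R2) (m : M1) (n : M2) :
    (letI := modT D R1 R2 M1 M2
     (r1 ⊗ₜ[D] r2) • (m ⊗ₜ[D] n)) = (r1 • m) ⊗ₜ[D] (r2 • n) := by
  show r1 • ((TensorProduct.comm D M1 M2).symm
      (r2 • (TensorProduct.comm D M1 M2 (m ⊗ₜ[D] n)))) = _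
  rw [TensorProduct.comm_tmul, TensorProduct.smul_tmul', TensorProduct.comm_symm_tmul,
    TensorProduct.smul_tmul']

set_option maxHeartbeats 1000000 in
/-- The fundamental equivalence
`(T ⊗[R1] M1) ⊗[T] (T ⊗[R2] M2) ≃ₗ[T] M1 ⊗[D] M2` where `T = R1 ⊗[D] R2`. -/
theorem mainEquiv :
    letI : Algebra R2 (R1 ⊗[D] R2) := Algebra.TensorProduct.rightAlgebra
    letI : Module (R1 ⊗[D] R2) (M1 ⊗[D] M2) := modT D R1 R2 M1 M2
    Nonempty ((((R1 ⊗[D] R2) ⊗[R1] M1) ⊗[R1 ⊗[D] R2] ((R1 ⊗[D] R2) ⊗[R2] M2))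
      ≃ₗ[R1 ⊗[D] R2] (M1 ⊗[D] M2)) := by
  letI : Algebra R2 (R1 ⊗[D] R2) := Algebra.TensorProduct.rightAlgebra
  letI instT : Module (R1 ⊗[D] R2) (M1 ⊗[D] M2) := modT D R1 R2 M1 M2
  have key : ∀ (r1 : R1) (r2 : R2) (m : M1) (n : M2),
      (r1 ⊗ₜ[D] r2) • (m ⊗ₜ[D] n) = (r1 • m) ⊗ₜ[D] (r2 • n) :=
    modT_key D R1 R2 M1 M2
  letI : Module R2 (M1 ⊗[D] M2) := Module.compHom _ (algebraMap R2 (R1 ⊗[D] R2))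
  letI : IsScalarTower R2 (R1 ⊗[D] R2) (M1 ⊗[D] M2) :=
    ⟨fun r t x => by rw [Algebra.smul_def, mul_smul]; rfl⟩
  have key2 : ∀ (r : R2) (m : M1) (n : M2), r • (m ⊗ₜ[D] n) = m ⊗ₜ[D] (r • n) := by
    intro r m n
    show ((1 : R1) ⊗ₜ[D] r) • (m ⊗ₜ[D] n) = m ⊗ₜ[D] (r • n)
    rw [key, one_smul]
  -- the forward map
  obtain ⟨f, f_apply⟩ :
      ∃ f : (((R1 ⊗[D] R2) ⊗[R1] M1) ⊗[R1 ⊗[D] R2] ((R1 ⊗[D] R2) ⊗[R2] M2)) →ₗ[R1 ⊗[D] R2]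
        (M1 ⊗[D] M2), ∀ (t s : R1 ⊗[D] R2) (m1 : M1) (m2 : M2),
          f ((t ⊗ₜ[R1] m1) ⊗ₜ[R1 ⊗[D] R2] (s ⊗ₜ[R2] m2)) = (t * s) • (m1 ⊗ₜ[D] m2) := by
    refine ⟨biLift (fun m1 m2 => m1 ⊗ₜ[D] m2)
      (fun m1 m1' m2 => TensorProduct.add_tmul m1 m1' m2)
      (fun m1 m2 m2' => TensorProduct.tmul_add m1 m2 m2')
      (fun r m1 m2 => by
        show (r • m1) ⊗ₜ[D] m2 = (r ⊗ₜ[D] (1 : R2)) • (m1 ⊗ₜ[D] m2)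
        rw [key, one_smul])
      (fun r m1 m2 => (key2 r m1 m2).symm), fun t s m1 m2 => biLift_tmul _ _ _ _ _ t s m1 m2⟩
  -- the inverse map
  have hg1 : ∀ d : D, algebraMap R1 (R1 ⊗[D] R2) (algebraMap D R1 d)
      = algebraMap D (R1 ⊗[D] R2) d := by
    intro d
    rw [Algebra.TensorProduct.algebraMap_apply, Algebra.TensorProduct.algebraMap_apply]
    simp
  have hg2 : ∀ d : D, algebraMap R2 (R1 ⊗[D] R2) (algebraMap D R2 d)
      = algebraMap D (R1 ⊗[D] R2) d := by
    intro d
    rw [Algebra.TensorProduct.algebraMap_apply' d]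
    rfl
  obtain ⟨g, g_apply⟩ :
      ∃ g : (M1 ⊗[D] M2) →+
        (((R1 ⊗[D] R2) ⊗[R1] M1) ⊗[R1 ⊗[D] R2] ((R1 ⊗[D] R2) ⊗[R2] M2)),
        ∀ (m1 : M1) (m2 : M2), g (m1 ⊗ₜ[D] m2)
          = ((1 : R1 ⊗[D] R2) ⊗ₜ[R1] m1) ⊗ₜ[R1 ⊗[D] R2] ((1 : R1 ⊗[D] R2) ⊗ₜ[R2] m2) := by
    refine ⟨biLiftD (D := D) (R1 := R1) (R2 := R2) (T := R1 ⊗[D] R2) (M1 := M1) (M2 := M2)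
      (Y := ((R1 ⊗[D] R2) ⊗[R1] M1) ⊗[R1 ⊗[D] R2] ((R1 ⊗[D] R2) ⊗[R2] M2)) hg1 hg2
      (fun m1 m2 => ((1 : R1 ⊗[D] R2) ⊗ₜ[R1] m1) ⊗ₜ[R1 ⊗[D] R2] ((1 : R1 ⊗[D] R2) ⊗ₜ[R2] m2))
      (fun m1 m1' m2 => by
        show ((1 : R1 ⊗[D] R2) ⊗ₜ[R1] (m1 + m1')) ⊗ₜ[R1 ⊗[D] R2] ((1 : R1 ⊗[D] R2) ⊗ₜ[R2] m2)
          = _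
        rw [TensorProduct.tmul_add, TensorProduct.add_tmul])
      (fun m1 m2 m2' => by
        show ((1 : R1 ⊗[D] R2) ⊗ₜ[R1] m1) ⊗ₜ[R1 ⊗[D] R2] ((1 : R1 ⊗[D] R2) ⊗ₜ[R2] (m2 + m2'))
          = _
        rw [TensorProduct.tmul_add, TensorProduct.tmul_add])
      (fun r m1 m2 => by
        show ((1 : R1 ⊗[D] R2) ⊗ₜ[R1] (r • m1)) ⊗ₜ[R1 ⊗[D] R2] ((1 : R1 ⊗[D] R2) ⊗ₜ[R2] m2)
          = algebraMap R1 (R1 ⊗[D] R2) r •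
            (((1 : R1 ⊗[D] R2) ⊗ₜ[R1] m1) ⊗ₜ[R1 ⊗[D] R2] ((1 : R1 ⊗[D] R2) ⊗ₜ[R2] m2))
        rw [TensorProduct.smul_tmul', TensorProduct.smul_tmul', smul_eq_mul, mul_one,
          Algebra.algebraMap_eq_smul_one (A := R1 ⊗[D] R2) r, TensorProduct.smul_tmul])
      (fun r m1 m2 => by
        show ((1 : R1 ⊗[D] R2) ⊗ₜ[R1] m1) ⊗ₜ[R1 ⊗[D] R2] ((1 : R1 ⊗[D] R2) ⊗ₜ[R2] (r • m2))
          = algebraMap R2 (R1 ⊗[D] R2) r •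
            (((1 : R1 ⊗[D] R2) ⊗ₜ[R1] m1) ⊗ₜ[R1 ⊗[D] R2] ((1 : R1 ⊗[D] R2) ⊗ₜ[R2] m2))
        rw [← TensorProduct.tmul_smul, TensorProduct.smul_tmul', smul_eq_mul, mul_one,
          Algebra.algebraMap_eq_smul_one (A := R1 ⊗[D] R2) r, TensorProduct.smul_tmul]),
      fun m1 m2 => biLiftD_tmul _ _ _ _ _ _ _ m1 m2⟩
  have hgf : ∀ x, g (f x) = x := by
    have base : ∀ (m1 : M1) (m2 : M2) (t : R1 ⊗[D] R2),
        g (f (((1 : R1 ⊗[D] R2) ⊗ₜ[R1] m1) ⊗ₜ[R1 ⊗[D] R2] (t ⊗ₜ[R2] m2)))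
          = ((1 : R1 ⊗[D] R2) ⊗ₜ[R1] m1) ⊗ₜ[R1 ⊗[D] R2] (t ⊗ₜ[R2] m2) := by
      intro m1 m2 t
      induction t using TensorProduct.induction_on with
      | zero =>
        rw [TensorProduct.zero_tmul, TensorProduct.tmul_zero, map_zero, map_zero]
      | add u v hu hv =>
        rw [TensorProduct.add_tmul, TensorProduct.tmul_add, map_add, map_add, hu, hv]
      | tmul r1 r2 =>
        rw [f_apply, one_mul, key, g_apply]
        -- rewrite the right-hand side
        have h1 : (r1 ⊗ₜ[D] r2) ⊗ₜ[R2] m2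
            = (r1 ⊗ₜ[D] r2) • ((1 : R1 ⊗[D] R2) ⊗ₜ[R2] m2) := by
          rw [TensorProduct.smul_tmul', smul_eq_mul, mul_one]
        rw [h1, ← TensorProduct.smul_tmul (r1 ⊗ₜ[D] r2) ((1 : R1 ⊗[D] R2) ⊗ₜ[R1] m1)
          ((1 : R1 ⊗[D] R2) ⊗ₜ[R2] m2)]
        have h2 : (r1 ⊗ₜ[D] r2) • ((1 : R1 ⊗[D] R2) ⊗ₜ[R1] m1)
            = (r1 ⊗ₜ[D] r2) ⊗ₜ[R1] m1 := by
          rw [TensorProduct.smul_tmul', smul_eq_mul, mul_one]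
        rw [h2]
        have h3 : (r1 ⊗ₜ[D] r2 : R1 ⊗[D] R2) ⊗ₜ[R1] m1
            = ((1 : R1) ⊗ₜ[D] r2) • (((1 : R1 ⊗[D] R2)) ⊗ₜ[R1] (r1 • m1)) := by
          rw [TensorProduct.smul_tmul', smul_eq_mul, mul_one]
          have : ((1 : R1) ⊗ₜ[D] r2 : R1 ⊗[D] R2) ⊗ₜ[R1] (r1 • m1)
              = (r1 • ((1 : R1) ⊗ₜ[D] r2 : R1 ⊗[D] R2)) ⊗ₜ[R1] m1 :=
            (TensorProduct.smul_tmul r1 _ m1).symm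
          rw [this, TensorProduct.smul_tmul', smul_eq_mul, mul_one]
        rw [h3, TensorProduct.smul_tmul]
        have h4 : ((1 : R1) ⊗ₜ[D] r2 : R1 ⊗[D] R2) • ((1 : R1 ⊗[D] R2) ⊗ₜ[R2] m2)
            = (1 : R1 ⊗[D] R2) ⊗ₜ[R2] (r2 • m2) := by
          rw [TensorProduct.smul_tmul', smul_eq_mul, mul_one]
          have : ((1 : R1) ⊗ₜ[D] r2 : R1 ⊗[D] R2) ⊗ₜ[R2] m2
              = (r2 • (1 : R1 ⊗[D] R2)) ⊗ₜ[R2] m2 := by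
            rw [← Algebra.algebraMap_eq_smul_one (A := R1 ⊗[D] R2) r2]
            rfl
          rw [this, TensorProduct.smul_tmul]
        rw [h4]
    intro x
    induction x using TensorProduct.induction_on with
    | zero => rw [map_zero, map_zero]
    | add a b ha hb => rw [map_add, map_add, ha, hb]
    | tmul u v =>
      induction u using TensorProduct.induction_on with
      | zero => rw [TensorProduct.zero_tmul, map_zero, map_zero]
      | add a b ha hb =>
        rw [TensorProduct.add_tmul, map_add, map_add, ha, hb]
      | tmul t m1 =>
        have h : (t ⊗ₜ[R1] m1) ⊗ₜ[R1 ⊗[D] R2] v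
            = ((1 : R1 ⊗[D] R2) ⊗ₜ[R1] m1) ⊗ₜ[R1 ⊗[D] R2] (t • v) := by
          rw [← TensorProduct.smul_tmul]
          congr 1
          rw [TensorProduct.smul_tmul', smul_eq_mul, mul_one]
        rw [h]
        induction (t • v) using TensorProduct.induction_on with
        | zero => rw [TensorProduct.tmul_zero, map_zero, map_zero]
        | add a b ha hb =>
          rw [TensorProduct.tmul_add, map_add, map_add, ha, hb]
        | tmul s m2 => exact base m1 m2 s
  have hfg : ∀ y, f (g y) = y := by
    intro y
    induction y using TensorProduct.induction_on with
    | zero => rw [map_zero, map_zero]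
    | add a b ha hb => rw [map_add, map_add, ha, hb]
    | tmul m1 m2 => rw [g_apply, f_apply, one_mul, one_smul]
  exact ⟨LinearEquiv.ofBijective f
    ⟨Function.LeftInverse.injective hgf, Function.RightInverse.surjective hfg⟩⟩

/-- Congruence: `R_i`-linear equivalences of the factors induce a `T`-linear equivalence of
the mixed tensor products. -/
theorem mixedCongr {N1 N2 : Type u} [AddCommGroup N1] [AddCommGroup N2]
    [Module D N1] [Module R1 N1] [IsScalarTower D R1 N1]
    [Module D N2] [Module R2 N2] [IsScalarTower D R2 N2]
    (e1 : M1 ≃ₗ[R1] N1) (e2 : M2 ≃ₗ[R2] N2) :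
    letI := modT D R1 R2 M1 M2
    letI := modT D R1 R2 N1 N2
    Nonempty ((M1 ⊗[D] M2) ≃ₗ[R1 ⊗[D] R2] (N1 ⊗[D] N2)) := by
  letI := modT D R1 R2 M1 M2
  letI := modT D R1 R2 N1 N2
  have key1 : ∀ (r1 : R1) (r2 : R2) (m : M1) (n : M2),
      (r1 ⊗ₜ[D] r2) • (m ⊗ₜ[D] n) = (r1 • m) ⊗ₜ[D] (r2 • n) :=
    modT_key D R1 R2 M1 M2
  have key2 : ∀ (r1 : R1) (r2 : R2) (m : N1) (n : N2),
      (r1 ⊗ₜ[D] r2) • (m ⊗ₜ[D] n) = (r1 • m) ⊗ₜ[D] (r2 • n) :=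
    modT_key D R1 R2 N1 N2
  refine ⟨(TensorProduct.congr (e1.restrictScalars D) (e2.restrictScalars D)).toAddEquiv.toLinearEquiv ?_⟩
  intro c x
  induction c using TensorProduct.induction_on with
  | zero => rw [zero_smul, zero_smul, map_zero]
  | add a b ha hb => rw [add_smul, add_smul, map_add, ha, hb]
  | tmul r1 r2 =>
    induction x using TensorProduct.induction_on with
    | zero => rw [smul_zero, map_zero, smul_zero]
    | add a b ha hb => rw [smul_add, map_add, map_add, smul_add, ha, hb]
    | tmul m n =>
      rw [key1]
      show (TensorProduct.congr (e1.restrictScalars D) (e2.restrictScalars D))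
          ((r1 • m) ⊗ₜ[D] (r2 • n))
        = (r1 ⊗ₜ[D] r2) • ((TensorProduct.congr (e1.restrictScalars D) (e2.restrictScalars D))
          (m ⊗ₜ[D] n))
      rw [TensorProduct.congr_tmul, TensorProduct.congr_tmul, key2,
        LinearEquiv.restrictScalars_apply, LinearEquiv.restrictScalars_apply,
        LinearEquiv.restrictScalars_apply, LinearEquiv.restrictScalars_apply,
        map_smul, map_smul]

end Aux

set_option maxHeartbeats 3000000 in
theorem statement14 (D R1 R2 : Type u) [CommRing D] [IsDomain D] [IsPrincipalIdealRing D]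
    [CommRing R1] [CommRing R2] [IsDomain R1] [IsDomain R2]
    [IsNoetherianRing R1] [IsNoetherianRing R2] [Algebra D R1] [Algebra D R2]
    (hinj1 : Function.Injective (algebraMap D R1))
    (hinj2 : Function.Injective (algebraMap D R2))
    (hT : IsNoetherianRing (R1 ⊗[D] R2))
    (a1 b1 a2 b2 : Type u) [AddCommGroup a1] [Module R1 a1] [AddCommGroup b1]
    [Module R1 b1] [AddCommGroup a2] [Module R2 a2] [AddCommGroup b2] [Module R2 b2]
    (ha1 : IsInvertibleModule R1 a1) (hb1 : IsInvertibleModule R1 b1)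
    (ha2 : IsInvertibleModule R2 a2) (hb2 : IsInvertibleModule R2 b2) :
    letI : Algebra R2 (R1 ⊗[D] R2) := Algebra.TensorProduct.rightAlgebra
    letI : Module D a1 := Module.compHom a1 (algebraMap D R1)
    letI : Module D b1 := Module.compHom b1 (algebraMap D R1)
    letI : Module D a2 := Module.compHom a2 (algebraMap D R2)
    letI : Module D b2 := Module.compHom b2 (algebraMap D R2)
    letI : Module D (a1 ⊗[R1] b1) := Module.compHom _ (algebraMap D R1)
    letI : Module D (a2 ⊗[R2] b2) := Module.compHom _ (algebraMap D R2)
    letI : IsScalarTower D R1 a1 := IsScalarTower.of_algebraMap_smul fun _ _ => rfl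
    letI : IsScalarTower D R1 b1 := IsScalarTower.of_algebraMap_smul fun _ _ => rfl
    letI : IsScalarTower D R2 a2 := IsScalarTower.of_algebraMap_smul fun _ _ => rfl
    letI : IsScalarTower D R2 b2 := IsScalarTower.of_algebraMap_smul fun _ _ => rfl
    letI : IsScalarTower D R1 (a1 ⊗[R1] b1) :=
      IsScalarTower.of_algebraMap_smul fun _ _ => rfl
    letI : IsScalarTower D R2 (a2 ⊗[R2] b2) :=
      IsScalarTower.of_algebraMap_smul fun _ _ => rfl
    letI : Module (R1 ⊗[D] R2) (a1 ⊗[D] a2) := modT D R1 R2 a1 a2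
    letI : Module (R1 ⊗[D] R2) (b1 ⊗[D] b2) := modT D R1 R2 b1 b2
    letI : Module (R1 ⊗[D] R2) ((a1 ⊗[R1] b1) ⊗[D] (a2 ⊗[R2] b2)) :=
      @modT D R1 R2 _ _ _ _ _ (a1 ⊗[R1] b1) (a2 ⊗[R2] b2) _ _ _ _
        (IsScalarTower.of_algebraMap_smul fun _ _ => rfl) _ _
        (IsScalarTower.of_algebraMap_smul fun _ _ => rfl)
    -- `a1 ⊗[D] a2` is invertible over `T` :
    IsInvertibleModule (R1 ⊗[D] R2) (a1 ⊗[D] a2) ∧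
    -- `[a1 ⊗[D] a2] = [a1 ⊗[R1] T] + [T ⊗[R2] a2]` in `Pic(T)` :
    Nonempty ((a1 ⊗[D] a2) ≃ₗ[R1 ⊗[D] R2]
      (((R1 ⊗[D] R2) ⊗[R1] a1) ⊗[R1 ⊗[D] R2] ((R1 ⊗[D] R2) ⊗[R2] a2))) ∧
    -- the map `Pic(R1) × Pic(R2) → Pic(T)` is a group homomorphism :
    Nonempty (((a1 ⊗[R1] b1) ⊗[D] (a2 ⊗[R2] b2)) ≃ₗ[R1 ⊗[D] R2]
      ((a1 ⊗[D] a2) ⊗[R1 ⊗[D] R2] (b1 ⊗[D] b2))) := by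
  letI : Algebra R2 (R1 ⊗[D] R2) := Algebra.TensorProduct.rightAlgebra
  letI : Module D a1 := Module.compHom a1 (algebraMap D R1)
  letI : Module D b1 := Module.compHom b1 (algebraMap D R1)
  letI : Module D a2 := Module.compHom a2 (algebraMap D R2)
  letI : Module D b2 := Module.compHom b2 (algebraMap D R2)
  letI : Module D (a1 ⊗[R1] b1) := Module.compHom _ (algebraMap D R1)
  letI : Module D (a2 ⊗[R2] b2) := Module.compHom _ (algebraMap D R2)
  letI : IsScalarTower D R1 a1 := IsScalarTower.of_algebraMap_smul fun _ _ => rfl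
  letI : IsScalarTower D R1 b1 := IsScalarTower.of_algebraMap_smul fun _ _ => rfl
  letI : IsScalarTower D R2 a2 := IsScalarTower.of_algebraMap_smul fun _ _ => rfl
  letI : IsScalarTower D R2 b2 := IsScalarTower.of_algebraMap_smul fun _ _ => rfl
  letI : IsScalarTower D R1 (a1 ⊗[R1] b1) :=
    IsScalarTower.of_algebraMap_smul fun _ _ => rfl
  letI : IsScalarTower D R2 (a2 ⊗[R2] b2) :=
    IsScalarTower.of_algebraMap_smul fun _ _ => rfl
  letI : Module (R1 ⊗[D] R2) (a1 ⊗[D] a2) := modT D R1 R2 a1 a2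
  letI : Module (R1 ⊗[D] R2) (b1 ⊗[D] b2) := modT D R1 R2 b1 b2
  letI : Module (R1 ⊗[D] R2) ((a1 ⊗[R1] b1) ⊗[D] (a2 ⊗[R2] b2)) :=
    @modT D R1 R2 _ _ _ _ _ (a1 ⊗[R1] b1) (a2 ⊗[R2] b2) _ _ _ _
      (IsScalarTower.of_algebraMap_smul fun _ _ => rfl) _ _
      (IsScalarTower.of_algebraMap_smul fun _ _ => rfl)
  obtain ⟨E⟩ := mainEquiv D R1 R2 a1 a2
  obtain ⟨Eb⟩ := mainEquiv D R1 R2 b1 b2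
  obtain ⟨Eab⟩ := @mainEquiv D R1 R2 _ _ _ _ _ (a1 ⊗[R1] b1) (a2 ⊗[R2] b2) _ _ _ _
    (IsScalarTower.of_algebraMap_smul fun _ _ => rfl) _ _ (IsScalarTower.of_algebraMap_smul fun _ _ => rfl)
  haveI : Module.Finite R1 a1 := ha1.1
  haveI : Module.Finite R2 a2 := ha2.1
  haveI : Module.Finite (R1 ⊗[D] R2) ((R1 ⊗[D] R2) ⊗[R1] a1) :=
    Module.Finite.base_change R1 (R1 ⊗[D] R2) a1
  haveI : Module.Finite (R1 ⊗[D] R2) ((R1 ⊗[D] R2) ⊗[R2] a2) :=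
    Module.Finite.base_change R2 (R1 ⊗[D] R2) a2
  refine ⟨⟨Module.Finite.equiv E, ?_⟩, ⟨E.symm⟩, ?_⟩
  · -- the inverse module
    obtain ⟨hfa1, c1, ic1g, ic1m, hfc1, ⟨e1⟩⟩ := ha1
    obtain ⟨hfa2, c2, ic2g, ic2m, hfc2, ⟨e2⟩⟩ := ha2
    letI := ic1g; letI := ic1m; letI := ic2g; letI := ic2m
    haveI := hfc1; haveI := hfc2
    letI : Module D c1 := Module.compHom c1 (algebraMap D R1)
    letI : Module D c2 := Module.compHom c2 (algebraMap D R2)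
    letI : IsScalarTower D R1 c1 := IsScalarTower.of_algebraMap_smul fun _ _ => rfl
    letI : IsScalarTower D R2 c2 := IsScalarTower.of_algebraMap_smul fun _ _ => rfl
    letI : Module D (a1 ⊗[R1] c1) := Module.compHom _ (algebraMap D R1)
    letI : Module D (a2 ⊗[R2] c2) := Module.compHom _ (algebraMap D R2)
    letI : IsScalarTower D R1 (a1 ⊗[R1] c1) :=
      IsScalarTower.of_algebraMap_smul fun _ _ => rfl
    letI : IsScalarTower D R2 (a2 ⊗[R2] c2) :=
      IsScalarTower.of_algebraMap_smul fun _ _ => rfl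
    obtain ⟨Ec⟩ := mainEquiv D R1 R2 c1 c2
    obtain ⟨Eac⟩ := @mainEquiv D R1 R2 _ _ _ _ _ (a1 ⊗[R1] c1) (a2 ⊗[R2] c2) _ _ _ _
      (IsScalarTower.of_algebraMap_smul fun _ _ => rfl) _ _ (IsScalarTower.of_algebraMap_smul fun _ _ => rfl)
    obtain ⟨Emc⟩ := @mixedCongr D R1 R2 _ _ _ _ _ (a1 ⊗[R1] c1) (a2 ⊗[R2] c2) _ _ _ _
      (IsScalarTower.of_algebraMap_smul fun _ _ => rfl) _ _ (IsScalarTower.of_algebraMap_smul fun _ _ => rfl) _ _ _ _ _ _ _ _ _ _ e1 e2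
    obtain ⟨Err⟩ := mainEquiv D R1 R2 R1 R2
    haveI : Module.Finite (R1 ⊗[D] R2) ((R1 ⊗[D] R2) ⊗[R1] c1) :=
      Module.Finite.base_change R1 (R1 ⊗[D] R2) c1
    haveI : Module.Finite (R1 ⊗[D] R2) ((R1 ⊗[D] R2) ⊗[R2] c2) :=
      Module.Finite.base_change R2 (R1 ⊗[D] R2) c2
    letI : Module (R1 ⊗[D] R2) (c1 ⊗[D] c2) := modT D R1 R2 c1 c2
    refine ⟨c1 ⊗[D] c2, inferInstance, modT D R1 R2 c1 c2, Module.Finite.equiv Ec, ⟨?_⟩⟩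
    exact (TensorProduct.congr E Ec).symm
      ≪≫ₗ TensorProduct.tensorTensorTensorComm (R1 ⊗[D] R2) _ _ _ _
      ≪≫ₗ TensorProduct.congr
          (TensorProduct.AlgebraTensorModule.distribBaseChange R1 (R1 ⊗[D] R2) a1 c1).symm
          (TensorProduct.AlgebraTensorModule.distribBaseChange R2 (R1 ⊗[D] R2) a2 c2).symm
      ≪≫ₗ Eac ≪≫ₗ Emc ≪≫ₗ Err.symm
      ≪≫ₗ TensorProduct.congr
          (TensorProduct.AlgebraTensorModule.rid R1 (R1 ⊗[D] R2) (R1 ⊗[D] R2))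
          (TensorProduct.AlgebraTensorModule.rid R2 (R1 ⊗[D] R2) (R1 ⊗[D] R2))
      ≪≫ₗ TensorProduct.lid (R1 ⊗[D] R2) (R1 ⊗[D] R2)
  · -- the homomorphism property
    refine ⟨Eab.symm
      ≪≫ₗ TensorProduct.congr
          (TensorProduct.AlgebraTensorModule.distribBaseChange R1 (R1 ⊗[D] R2) a1 b1)
          (TensorProduct.AlgebraTensorModule.distribBaseChange R2 (R1 ⊗[D] R2) a2 b2)
      ≪≫ₗ TensorProduct.tensorTensorTensorComm (R1 ⊗[D] R2) _ _ _ _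
      ≪≫ₗ TensorProduct.congr E Eb⟩
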